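/- arXiv:1705.08137 — 10 statements merged into one kernel-verified Lean document; each statement's English description precedes it below -/
import Mathlib

section
/- If X is a normal Hausdorff space, then every lower semicontinuous function f : X → ℝ ∪ {+∞} with nonempty domain which is bounded below by some bounded continuous function equals the pointwise supremum of the bounded continuous functions lying below it: f(x) = sup{φ(x) : φ ∈ C_b(X), φ ≤ f} for all x ∈ X. -/
theorem lsc_eq_sup_bounded_continuous_minorants
    {X : Type*} [TopologicalSpace X] [T2Space X] [NormalSpace X]
    (f : X → EReal) (hf : LowerSemicontinuous f)
    (hfbot : ∀ x, f x ≠ ⊥) (hdom : ∃ x, f x ≠ ⊤)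
    (hmin : ∃ φ : X → ℝ, Continuous φ ∧ (∃ M : ℝ, ∀ x, |φ x| ≤ M) ∧
      ∀ x, (φ x : EReal) ≤ f x) :
    ∀ x : X, f x =
      ⨆ φ : {φ : X → ℝ // Continuous φ ∧ (∃ M : ℝ, ∀ y, |φ y| ≤ M) ∧
        ∀ y, ((φ : X → ℝ) y : EReal) ≤ f y}, ((φ : X → ℝ) x : EReal) := by
  obtain ⟨ψ, hψc, ⟨M, hψM⟩, hψf⟩ := hmin
  have hM0 : 0 ≤ M := le_trans (abs_nonneg _) (hψM (Classical.choice ⟨hdom.choose⟩))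
  intro x
  set S := ⨆ φ : {φ : X → ℝ // Continuous φ ∧ (∃ M : ℝ, ∀ y, |φ y| ≤ M) ∧
        ∀ y, ((φ : X → ℝ) y : EReal) ≤ f y}, ((φ : X → ℝ) x : EReal) with hS
  refine le_antisymm ?_ (iSup_le fun φ => φ.2.2.2 x)
  by_contra hlt
  push_neg at hlt
  obtain ⟨r, hr1, hr2⟩ := EReal.exists_between_coe_real hlt
  have hxU : x ∈ f ⁻¹' Set.Ioi (r : EReal) := hr2
  have hUopen : IsOpen (f ⁻¹' Set.Ioi (r : EReal)) := hf.isOpen_preimage r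
  obtain ⟨u, hu0, hu1, hu01⟩ := exists_continuous_zero_one_of_isClosed
    (hUopen.isClosed_compl) (isClosed_singleton (x := x))
    (Set.disjoint_singleton_right.mpr (not_not.mpr hxU))
  set C : ℝ := |r| + M with hC
  have hC0 : 0 ≤ C := by positivity
  set φ : X → ℝ := fun y => max (ψ y) (r + (u y - 1) * C) with hφ
  have hφc : Continuous φ := hψc.max (continuous_const.add ((u.continuous.sub continuous_const).mul continuous_const))
  have hφb : ∀ y, |φ y| ≤ M + |r| + C := by
    intro y
    have h1 : u y ≤ 1 := (hu01 y).2
    have habs := abs_le.1 (hψM y)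
    rw [abs_le]
    constructor
    · have h2 : ψ y ≤ φ y := le_max_left _ _
      linarith [abs_nonneg r, habs.1]
    · have h3 : φ y ≤ max (ψ y) r := by
        apply max_le (le_max_left _ _)
        refine le_trans ?_ (le_max_right _ _)
        nlinarith
      refine le_trans h3 (max_le ?_ ?_)
      · linarith [abs_nonneg r, habs.2]
      · linarith [le_abs_self r]
  have hφf : ∀ y, ((φ y : ℝ) : EReal) ≤ f y := by
    intro y
    rcases max_cases (ψ y) (r + (u y - 1) * C) with ⟨h, _⟩ | ⟨h, _⟩
    · rw [hφ]; simp only []; rw [h]; exact hψf y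
    · rw [hφ]; simp only []; rw [h]
      by_cases hy : y ∈ f ⁻¹' Set.Ioi (r : EReal)
      · refine le_of_lt (lt_of_le_of_lt ?_ hy)
        have h1 : u y ≤ 1 := (hu01 y).2
        have : (r + (u y - 1) * C : ℝ) ≤ r := by nlinarith
        exact_mod_cast this
      · have hu : u y = 0 := hu0 hy
        have habs := abs_le.1 (hψM y)
        have : (r + (u y - 1) * C : ℝ) ≤ ψ y := by
          rw [hu, hC]; linarith [le_abs_self r, habs.1]
        exact le_trans (by exact_mod_cast this) (hψf y)
  have hφx : (r : ℝ) ≤ φ x := by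
    have hux : u x = 1 := hu1 rfl
    rw [hφ]; simp [hux]
  have hkey : ((r : ℝ) : EReal) ≤ S := by
    rw [hS]
    refine le_trans (by exact_mod_cast hφx) (le_iSup _ ⟨φ, hφc, ⟨M + |r| + C, hφb⟩, hφf⟩)
  exact absurd (lt_of_le_of_lt hkey hr1) (lt_irrefl _)
end

section
/- Let X be a normal Hausdorff space, Y a Banach space contained in C_b(X) with ‖·‖ ≥ ‖·‖_∞ and (X,Y) satisfying property (H). Let f : X → ℝ ∪ {+∞} be bounded from below, lower semicontinuous, with nonempty domain. Define F(f)(Q) := sup_{φ∈Y}(Q(φ) − f^×(φ)) for Q ∈ Y*. Then F(f) is convex and weak*-lower semicontinuous on Y*, its effective domain is contained in the weak*-closed convex hull of Δ_Y(X), and F(f)(δ_x) = f(x) for every x ∈ X. -/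
/-!
Since `f` is bounded below and finite somewhere, `f^×` is real-valued, so `F(f)` is a pointwise
supremum of the weak*-continuous affine maps `Q ↦ Q φ - f^×(φ)`; hence it is convex and
weak*-lower semicontinuous. If `Q` lies outside the weak*-closed convex hull of the Dirac
functionals, Hahn–Banach in the weak* topology gives `φ ∈ Y` with `φ ≤ u < Q φ` on `X`, and then
`Q (t φ) - f^×(t φ) ≥ t (Q φ - u) + inf f → ∞`. Finally `F(f)(δₓ) ≤ f x` is the Fenchel–Young
inequality, while for `r < f x` a bump `σ` from (H) vanishing off the open set `{f > r}` gives
`F(f)(δₓ) ≥ t - f^×(t σ) ≥ r` once `t ≥ r - inf f`.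
-/

open BoundedContinuousFunction

/-- The transform `F(f)(Q) = sup_{φ ∈ Y} (Q(φ) − f^×(φ))`, where
`f^×(φ) = sup_x (φ x − f x)`. -/
noncomputable def FTransform {X : Type*} [TopologicalSpace X]
    {Y : Type*} [NormedAddCommGroup Y] [NormedSpace ℝ Y]
    (j : Y →ₗ[ℝ] (X →ᵇ ℝ)) (f : X → EReal) (Q : WeakDual ℝ Y) : EReal :=
  ⨆ φ : Y, ((Q φ : EReal) - ⨆ x : X, ((j φ x : EReal) - f x))

/-- The paper's `f^×`, evaluated at an arbitrary real function. -/
noncomputable def fenchelConj {X : Type*} (f : X → EReal) (φ : X → ℝ) : EReal :=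
  ⨆ x, (φ x : EReal) - f x

section fenchelConj
variable {X : Type*} {f : X → EReal} {m : ℝ}

lemma sub_le_fenchelConj (φ : X → ℝ) (x : X) : (φ x : EReal) - f x ≤ fenchelConj f φ :=
  le_iSup (fun x => (φ x : EReal) - f x) x

lemma fenchelConj_le (hm : ∀ x, (m : EReal) ≤ f x) {φ : X → ℝ} {u : ℝ} (hu : ∀ x, φ x ≤ u) :
    fenchelConj f φ ≤ ((u - m : ℝ) : EReal) :=
  iSup_le fun x => EReal.sub_le_sub (EReal.coe_le_coe_iff.2 (hu x)) (hm x)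

lemma fenchelConj_ne_bot {x : X} (hx : f x ≠ ⊤) (φ : X → ℝ) : fenchelConj f φ ≠ ⊥ :=
  ne_bot_of_le_ne_bot (by simp [sub_eq_add_neg, EReal.add_eq_bot_iff, hx])
    (sub_le_fenchelConj φ x)

lemma fenchelConj_ne_top [TopologicalSpace X] (hm : ∀ x, (m : EReal) ≤ f x) (φ : X →ᵇ ℝ) :
    fenchelConj f φ ≠ ⊤ :=
  ne_top_of_le_ne_top (EReal.coe_ne_top _)
    (fenchelConj_le hm fun x => (le_abs_self _).trans (φ.norm_coe_le_norm x))

lemma fenchelConj_smul_le (hm : ∀ x, (m : EReal) ≤ f x) {r t : ℝ} (ht : 0 ≤ t) {σ : X → ℝ}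
    (hσ1 : ∀ y, σ y ≤ 1) (hσ0 : ∀ y, ¬ (r : EReal) < f y → σ y = 0) :
    fenchelConj f (t • σ) ≤ ((max (t - r) (-m) : ℝ) : EReal) := by
  refine iSup_le fun y => ?_
  by_cases hy : (r : EReal) < f y
  · calc ((t * σ y : ℝ) : EReal) - f y ≤ (t : EReal) - r :=
          EReal.sub_le_sub (EReal.coe_le_coe_iff.2 (mul_le_of_le_one_right ht (hσ1 y))) hy.le
      _ ≤ ((max (t - r) (-m) : ℝ) : EReal) := EReal.coe_le_coe_iff.2 (le_max_left _ _)
  · calc (((t • σ) y : ℝ) : EReal) - f y ≤ ((0 - m : ℝ) : EReal) := by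
          simpa [hσ0 y hy] using EReal.sub_le_sub (le_refl (0 : EReal)) (hm y)
      _ ≤ ((max (t - r) (-m) : ℝ) : EReal) := EReal.coe_le_coe_iff.2 (by simp)

end fenchelConj

section SupAffine
variable {E ι : Type*} [AddCommGroup E] [Module ℝ E] [TopologicalSpace E]

lemma lowerSemicontinuous_iSup_sub (ℓ : ι → StrongDual ℝ E) (c : ι → ℝ) :
    LowerSemicontinuous fun x => ⨆ i, ((ℓ i x - c i : ℝ) : EReal) :=
  lowerSemicontinuous_iSup fun i =>
    (continuous_coe_real_ereal.comp ((ℓ i).continuous.sub continuous_const)).lowerSemicontinuous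

lemma iSup_sub_smul_add_smul_le (ℓ : ι → StrongDual ℝ E) (c : ι → ℝ) (x y : E) {a b : ℝ}
    (ha : 0 ≤ a) (hb : 0 ≤ b) (hab : a + b = 1) :
    ⨆ i, ((ℓ i (a • x + b • y) - c i : ℝ) : EReal) ≤
      (a : EReal) * (⨆ i, ((ℓ i x - c i : ℝ) : EReal)) +
        (b : EReal) * ⨆ i, ((ℓ i y - c i : ℝ) : EReal) := by
  refine iSup_le fun i => ?_
  have hsplit : ℓ i (a • x + b • y) - c i = a * (ℓ i x - c i) + b * (ℓ i y - c i) := by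
    simp only [map_add, map_smul, smul_eq_mul]
    linear_combination c i * hab
  rw [hsplit, EReal.coe_add, EReal.coe_mul, EReal.coe_mul]
  exact add_le_add
    (mul_le_mul_of_nonneg_left (le_iSup (fun i => ((ℓ i x - c i : ℝ) : EReal)) i)
      (EReal.coe_nonneg.2 ha))
    (mul_le_mul_of_nonneg_left (le_iSup (fun i => ((ℓ i y - c i : ℝ) : EReal)) i)
      (EReal.coe_nonneg.2 hb))

end SupAffine

lemma WeakDual.exists_eval_lt_of_notMem_closure_convexHull {E : Type*} [AddCommGroup E]
    [TopologicalSpace E] [Module ℝ E] {S : Set (WeakDual ℝ E)}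
    {Q : WeakDual ℝ E} (hQ : Q ∉ closure (convexHull ℝ S)) :
    ∃ φ : E, ∃ u : ℝ, (∀ P ∈ S, P φ < u) ∧ u < Q φ := by
  have : LocallyConvexSpace ℝ (WeakDual ℝ E) := WeakBilin.locallyConvexSpace
  obtain ⟨G, u, hGS, hGQ⟩ := geometric_hahn_banach_closed_point
    (convex_convexHull ℝ S).closure isClosed_closure hQ
  obtain ⟨φ, rfl⟩ := (topDualPairing ℝ E).dualEmbedding_surjective G
  exact ⟨φ, u, fun P hP => hGS P (subset_closure (subset_convexHull ℝ S hP)), hGQ⟩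

lemma EReal.coe_sub_le_comm {a : ℝ} {b c : EReal} :
    (a : EReal) - b ≤ c ↔ (a : EReal) - c ≤ b := by
  constructor <;> intro h <;> induction b <;> induction c <;> simp_all [← EReal.coe_sub] <;>
    linarith

section FTransform
variable {X : Type*} [TopologicalSpace X] {Y : Type*} [NormedAddCommGroup Y] [NormedSpace ℝ Y]
  (j : Y →ₗ[ℝ] (X →ᵇ ℝ)) {f : X → EReal} {m : ℝ}

lemma sub_fenchelConj_le_FTransform (Q : WeakDual ℝ Y) (φ : Y) :
    (Q φ : EReal) - fenchelConj f (j φ) ≤ FTransform j f Q :=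
  le_iSup (fun φ => (Q φ : EReal) - fenchelConj f (j φ)) φ

lemma FTransform_eq_iSup_sub (hm : ∀ x, (m : EReal) ≤ f x) {x₀ : X} (hx₀ : f x₀ ≠ ⊤) :
    FTransform j f = fun Q => ⨆ φ, ((Q φ - (fenchelConj f (j φ)).toReal : ℝ) : EReal) := by
  funext Q
  refine iSup_congr fun φ => ?_
  rw [EReal.coe_sub, EReal.coe_toReal (fenchelConj_ne_top hm _) (fenchelConj_ne_bot hx₀ _)]
  rfl

lemma FTransform_eq_top_of_lt_eval (hm : ∀ x, (m : EReal) ≤ f x) {Q : WeakDual ℝ Y} {φ : Y}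
    {u : ℝ} (hφ : ∀ x, j φ x ≤ u) (hQ : u < Q φ) : FTransform j f Q = ⊤ := by
  refine (EReal.eq_top_iff_forall_lt _).2 fun r => ?_
  set t := (|r - m| + 1) / (Q φ - u)
  have ht : 0 ≤ t := div_nonneg (by positivity) (sub_pos.2 hQ).le
  have hgap : t * (Q φ - u) = |r - m| + 1 := div_mul_cancel₀ _ (sub_pos.2 hQ).ne'
  calc (r : EReal) < ((t * Q φ - (t * u - m) : ℝ) : EReal) :=
        EReal.coe_lt_coe_iff.2 (by linarith [le_abs_self (r - m)])
    _ ≤ (Q (t • φ) : EReal) - fenchelConj f (j (t • φ)) := by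
        rw [EReal.coe_sub, map_smul, smul_eq_mul]
        refine EReal.sub_le_sub le_rfl (fenchelConj_le hm fun x => ?_)
        simpa using mul_le_mul_of_nonneg_left (hφ x) ht
    _ ≤ FTransform j f Q := sub_fenchelConj_le_FTransform j Q _

lemma FTransform_le_of_eval {Q : WeakDual ℝ Y} {x : X} (hQ : ∀ φ, Q φ = j φ x) :
    FTransform j f Q ≤ f x :=
  iSup_le fun φ => hQ φ ▸ EReal.coe_sub_le_comm.1 (sub_le_fenchelConj (j φ) x)

lemma le_FTransform_of_bump (hm : ∀ x, (m : EReal) ≤ f x) {Q : WeakDual ℝ Y} {x : X} {r : ℝ}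
    {σ : Y} (hσ1 : ∀ y, j σ y ≤ 1) (hσx : j σ x = 1) (hσ0 : ∀ y, ¬ (r : EReal) < f y → j σ y = 0)
    (hQ : ∀ φ, Q φ = j φ x) : (r : EReal) ≤ FTransform j f Q := by
  set t := max 0 (r - m)
  have hjt : ⇑(j (t • σ)) = t • ⇑(j σ) := by rw [map_smul]; rfl
  calc (r : EReal) ≤ ((t - max (t - r) (-m) : ℝ) : EReal) := by
        refine EReal.coe_le_coe_iff.2 (le_sub_comm.1 (max_le le_rfl ?_))
        linarith [le_max_right 0 (r - m)]
    _ ≤ (Q (t • σ) : EReal) - fenchelConj f (j (t • σ)) := by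
        rw [EReal.coe_sub, hQ, hjt, Pi.smul_apply, hσx, smul_eq_mul, mul_one]
        exact EReal.sub_le_sub le_rfl (fenchelConj_smul_le hm (le_max_left 0 (r - m)) hσ1 hσ0)
    _ ≤ FTransform j f Q := sub_fenchelConj_le_FTransform j Q _

lemma FTransform_eq_of_eval
    (hH : ∀ x : X, ∀ U : Set X, IsOpen U → x ∈ U →
      ∃ σ : Y, (∀ y, j σ y ∈ Set.Icc (0 : ℝ) 1) ∧ j σ x = 1 ∧ ∀ y ∉ U, j σ y = 0)
    (hf : LowerSemicontinuous f) (hm : ∀ x, (m : EReal) ≤ f x) {Q : WeakDual ℝ Y} {x : X}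
    (hQ : ∀ φ, Q φ = j φ x) : FTransform j f Q = f x := by
  refine le_antisymm (FTransform_le_of_eval j hQ) (EReal.ge_of_forall_gt_iff_ge.1 fun r hr => ?_)
  obtain ⟨σ, hσ, hσx, hσ0⟩ := hH x {y | (r : EReal) < f y} (hf.isOpen_preimage r) hr
  exact le_FTransform_of_bump j hm (fun y => (hσ y).2) hσx hσ0 hQ

end FTransform

theorem FTransform_convex_lsc_extension_general
    {X : Type*} [TopologicalSpace X]
    (Y : Type*) [NormedAddCommGroup Y] [NormedSpace ℝ Y]
    (j : Y →ₗ[ℝ] (X →ᵇ ℝ))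
    (hnorm : ∀ φ : Y, ‖j φ‖ ≤ ‖φ‖)
    (hH : ∀ x : X, ∀ U : Set X, IsOpen U → x ∈ U →
      ∃ σ : Y, (∀ y, j σ y ∈ Set.Icc (0 : ℝ) 1) ∧ j σ x = 1 ∧ ∀ y ∉ U, j σ y = 0)
    (f : X → EReal) (hf : LowerSemicontinuous f)
    (hbdd : ∃ m : ℝ, ∀ x, (m : EReal) ≤ f x) (hdom : ∃ x, f x ≠ ⊤) :
    -- convexity of F(f)
    (∀ Q₁ Q₂ : WeakDual ℝ Y, ∀ a b : ℝ, 0 ≤ a → 0 ≤ b → a + b = 1 →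
      FTransform j f (a • Q₁ + b • Q₂) ≤
        (a : EReal) * FTransform j f Q₁ + (b : EReal) * FTransform j f Q₂) ∧
    -- weak* lower semicontinuity of F(f)
    LowerSemicontinuous (FTransform j f) ∧
    -- the Dirac map, the domain inclusion, and the extension property
    ∃ Δ : X → WeakDual ℝ Y, (∀ (x : X) (φ : Y), Δ x φ = j φ x) ∧
      {Q : WeakDual ℝ Y | FTransform j f Q ≠ ⊤} ⊆
        closure (convexHull ℝ (Set.range Δ)) ∧
      ∀ x : X, FTransform j f (Δ x) = f x := by
  obtain ⟨m, hm⟩ := hbdd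
  obtain ⟨x₀, hx₀⟩ := hdom
  have hF := FTransform_eq_iSup_sub j hm hx₀
  let J : Y →L[ℝ] (X →ᵇ ℝ) := j.mkContinuous 1 fun φ => by simpa using hnorm φ
  let Δ : X → WeakDual ℝ Y := fun x => StrongDual.toWeakDual ((evalCLM ℝ x).comp J)
  refine ⟨fun Q₁ Q₂ a b ha hb hab => ?_, ?_, Δ, fun _ _ => rfl, fun Q hQ => ?_,
    fun x => FTransform_eq_of_eval j hH hf hm fun _ => rfl⟩
  · rw [hF]
    exact iSup_sub_smul_add_smul_le (E := WeakDual ℝ Y) (WeakBilin.eval (topDualPairing ℝ Y)) _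
      Q₁ Q₂ ha hb hab
  · rw [hF]
    exact lowerSemicontinuous_iSup_sub (E := WeakDual ℝ Y) (WeakBilin.eval (topDualPairing ℝ Y))
      _
  · by_contra hQΔ
    obtain ⟨φ, u, hΔu, huQ⟩ := WeakDual.exists_eval_lt_of_notMem_closure_convexHull hQΔ
    exact hQ (FTransform_eq_top_of_lt_eval j hm (fun x => (hΔu _ ⟨x, rfl⟩).le) huQ)

theorem FTransform_convex_lsc_extension
    {X : Type*} [TopologicalSpace X] [T2Space X] [NormalSpace X]
    (Y : Type*) [NormedAddCommGroup Y] [NormedSpace ℝ Y] [CompleteSpace Y]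
    (j : Y →ₗ[ℝ] (X →ᵇ ℝ)) (hj : Function.Injective j)
    (hnorm : ∀ φ : Y, ‖j φ‖ ≤ ‖φ‖)
    (hH : ∀ x : X, ∀ U : Set X, IsOpen U → x ∈ U →
      ∃ σ : Y, (∀ y, j σ y ∈ Set.Icc (0 : ℝ) 1) ∧ j σ x = 1 ∧ ∀ y ∉ U, j σ y = 0)
    (f : X → EReal) (hf : LowerSemicontinuous f)
    (hbdd : ∃ m : ℝ, ∀ x, (m : EReal) ≤ f x) (hdom : ∃ x, f x ≠ ⊤) :
    -- convexity of F(f)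
    (∀ Q₁ Q₂ : WeakDual ℝ Y, ∀ a b : ℝ, 0 ≤ a → 0 ≤ b → a + b = 1 →
      FTransform j f (a • Q₁ + b • Q₂) ≤
        (a : EReal) * FTransform j f Q₁ + (b : EReal) * FTransform j f Q₂) ∧
    -- weak* lower semicontinuity of F(f)
    LowerSemicontinuous (FTransform j f) ∧
    -- the Dirac map, the domain inclusion, and the extension property
    ∃ Δ : X → WeakDual ℝ Y, (∀ (x : X) (φ : Y), Δ x φ = j φ x) ∧
      {Q : WeakDual ℝ Y | FTransform j f Q ≠ ⊤} ⊆
        closure (convexHull ℝ (Set.range Δ)) ∧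
      ∀ x : X, FTransform j f (Δ x) = f x :=
  FTransform_convex_lsc_extension_general Y j hnorm hH f hf hbdd hdom
end

section
/- With X normal Hausdorff and Y ⊆ C_b(X) a Banach space with ‖·‖ ≥ ‖·‖_∞ satisfying property (H): if f is the constant function c ∈ ℝ on X, then F(c)(Q) = c for all Q in the weak*-closed convex hull of Δ_Y(X), and F(c)(Q) = +∞ for Q outside it. In particular every Q in the weak*-closed convex hull of Δ_Y(X) satisfies Q(φ) ≤ sup_{x∈X} φ(x) for all φ ∈ Y. -/
open BoundedContinuousFunction

/-!
By Hahn–Banach, together with the fact that every weak*-continuous functional on `Y*` is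
evaluation at some `φ ∈ Y`, the weak*-closed convex hull of `Δ(X)` is the set of `Q` with
`Q φ ≤ sup_X φ` for all `φ`. For a constant `c` the transform is
`F(c)(Q) = c + sup_φ (Q φ - sup_X φ)`, and `φ ↦ Q φ - sup_X φ` is positively homogeneous,
so this supremum is `0` on that set and `+∞` off it.
-/

open Set

section WeakDual

variable {Y : Type*} [AddCommGroup Y] [TopologicalSpace Y] [Module ℝ Y]

-- Instance search does not see through the definition of `WeakDual` as a `WeakBilin`.
instance WeakDual.instLocallyConvexSpace : LocallyConvexSpace ℝ (WeakDual ℝ Y) :=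
  WeakBilin.locallyConvexSpace

theorem WeakDual.exists_forall_apply_eq_apply (L : StrongDual ℝ (WeakDual ℝ Y)) :
    ∃ ψ : Y, ∀ Q : WeakDual ℝ Y, L Q = Q ψ := by
  obtain ⟨ψ, rfl⟩ := LinearMap.dualEmbedding_surjective (topDualPairing ℝ Y) L
  exact ⟨ψ, fun _ => rfl⟩

theorem WeakDual.closure_convexHull_range_eq {ι : Type*} [Nonempty ι] (δ : ι → WeakDual ℝ Y)
    (hδ : ∀ φ, BddAbove (range fun i => δ i φ)) :
    closure (convexHull ℝ (range δ)) = {Q | ∀ φ, Q φ ≤ ⨆ i, δ i φ} := by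
  refine Subset.antisymm (closure_minimal (convexHull_min ?_ ?_) ?_) fun Q hQ => ?_
  · rintro _ ⟨i, rfl⟩ φ
    exact le_ciSup (hδ φ) i
  · intro P hP R hR a b ha hb hab φ
    calc (a • P + b • R) φ = a * P φ + b * R φ := rfl
      _ ≤ a * (⨆ i, δ i φ) + b * ⨆ i, δ i φ := by gcongr <;> [exact hP φ; exact hR φ]
      _ = ⨆ i, δ i φ := by rw [← add_mul, hab, one_mul]
  · simp only [ofPred_forall]
    exact isClosed_iInter fun φ => isClosed_le (WeakDual.eval_continuous φ) continuous_const
  · by_contra hQS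
    obtain ⟨L, u, hLS, huQ⟩ := geometric_hahn_banach_closed_point
      (convex_convexHull ℝ (range δ)).closure isClosed_closure hQS
    obtain ⟨ψ, hψ⟩ := WeakDual.exists_forall_apply_eq_apply L
    have hsup : ⨆ i, δ i ψ ≤ u := ciSup_le fun i => by
      simpa [hψ] using (hLS _ (subset_closure (subset_convexHull ℝ _ (mem_range_self i)))).le
    rw [hψ] at huQ
    linarith [hQ ψ]

end WeakDual

theorem EReal.coe_ciSup {ι : Type*} [Nonempty ι] {f : ι → ℝ} (hf : BddAbove (range f)) :
    ((⨆ i, f i : ℝ) : EReal) = ⨆ i, (f i : EReal) :=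
  Monotone.map_ciSup_of_continuousAt continuous_coe_real_ereal.continuousAt
    (fun _ _ => EReal.coe_le_coe) hf

theorem EReal.iSup_coe_add_eq_of_nonpos {Y : Type*} [Zero Y] {g : Y → ℝ} (hg : ∀ φ, g φ ≤ 0)
    (hg0 : g 0 = 0) (c : ℝ) :
    ⨆ φ, ((g φ + c : ℝ) : EReal) = c :=
  le_antisymm (iSup_le fun φ => EReal.coe_le_coe_iff.2 (by linarith [hg φ]))
    (le_iSup_of_le 0 (by simp [hg0]))

theorem EReal.iSup_coe_add_eq_top_of_pos {Y : Type*} [SMul ℝ Y] {g : Y → ℝ}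
    (hg : ∀ t : ℝ, 0 ≤ t → ∀ φ, g (t • φ) = t * g φ) {ψ : Y} (hψ : 0 < g ψ) (c : ℝ) :
    ⨆ φ, ((g φ + c : ℝ) : EReal) = ⊤ := by
  refine (EReal.eq_top_iff_forall_lt _).2 fun r => ?_
  obtain ⟨n, hn⟩ := exists_nat_gt ((r - c) / g ψ)
  refine lt_iSup_iff.2 ⟨(n : ℝ) • ψ, EReal.coe_lt_coe_iff.2 ?_⟩
  rw [hg n n.cast_nonneg, ← sub_lt_iff_lt_add]
  exact (div_lt_iff₀ hψ).1 hn

section FTransform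

variable {X : Type*} [TopologicalSpace X] {Y : Type*} [NormedAddCommGroup Y] [NormedSpace ℝ Y]

theorem BoundedContinuousFunction.bddAbove_range (f : X →ᵇ ℝ) : BddAbove (range f) :=
  f.isBounded_range.bddAbove

theorem BoundedContinuousFunction.ciSup_smul {t : ℝ} (ht : 0 ≤ t) (f : X →ᵇ ℝ) :
    ⨆ x, (t • f) x = t * ⨆ x, f x := by
  simp only [coe_smul, smul_eq_mul, Real.mul_iSup_of_nonneg ht]

theorem FTransform_const_eq [Nonempty X] (j : Y →ₗ[ℝ] (X →ᵇ ℝ)) (c : ℝ) (Q : WeakDual ℝ Y) :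
    FTransform j (fun _ => c) Q = ⨆ φ, ((Q φ - (⨆ x, j φ x) + c : ℝ) : EReal) := by
  refine iSup_congr fun φ => ?_
  have hsub : ⨆ x, ((j φ x : EReal) - c) = (((⨆ x, j φ x) - c : ℝ) : EReal) :=
    (Monotone.map_ciSup_of_continuousAt (f := fun t : ℝ => ((t - c : ℝ) : EReal))
      (continuous_coe_real_ereal.comp (continuous_sub_right c)).continuousAt
      (fun _ _ h => EReal.coe_le_coe_iff.2 (by linarith)) (j φ).bddAbove_range).symm.trans
      (by simp only [EReal.coe_sub])
  rw [hsub, ← EReal.coe_sub, sub_sub_eq_add_sub, add_sub_right_comm]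

end FTransform

theorem FTransform_const_general
    {X : Type*} [TopologicalSpace X] [Nonempty X]
    (Y : Type*) [NormedAddCommGroup Y] [NormedSpace ℝ Y]
    (j : Y →ₗ[ℝ] (X →ᵇ ℝ))
    (hnorm : ∀ φ : Y, ‖j φ‖ ≤ ‖φ‖)
    (c : ℝ) :
    ∃ Δ : X → WeakDual ℝ Y, (∀ (x : X) (φ : Y), Δ x φ = j φ x) ∧
      (∀ Q ∈ closure (convexHull ℝ (Set.range Δ)),
        FTransform j (fun _ => (c : EReal)) Q = (c : EReal) ∧
        ∀ φ : Y, (Q φ : EReal) ≤ ⨆ x : X, (j φ x : EReal)) ∧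
      (∀ Q : WeakDual ℝ Y, Q ∉ closure (convexHull ℝ (Set.range Δ)) →
        FTransform j (fun _ => (c : EReal)) Q = ⊤) := by
  let Δ : X → WeakDual ℝ Y := fun x =>
    (evalCLM ℝ x).comp (j.mkContinuous 1 fun φ => by simpa using hnorm φ)
  refine ⟨Δ, fun _ _ => rfl, ?_⟩
  rw [WeakDual.closure_convexHull_range_eq Δ fun φ => (j φ).bddAbove_range]
  refine ⟨fun Q hQ => ⟨?_, fun φ => ?_⟩, fun Q hQ => ?_⟩
  · rw [FTransform_const_eq]
    exact EReal.iSup_coe_add_eq_of_nonpos (fun φ => sub_nonpos.2 (hQ φ)) (by simp) c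
  · rw [← EReal.coe_ciSup (j φ).bddAbove_range]
    exact EReal.coe_le_coe_iff.2 (hQ φ)
  · simp only [mem_ofPred_eq, not_forall, not_le] at hQ
    obtain ⟨ψ, hψ⟩ : ∃ ψ, ⨆ x, j ψ x < Q ψ := hQ
    rw [FTransform_const_eq]
    refine EReal.iSup_coe_add_eq_top_of_pos (g := fun φ => Q φ - ⨆ x, j φ x) (fun t ht φ => ?_)
      (sub_pos.2 hψ) c
    rw [map_smul, map_smul, ciSup_smul ht, smul_eq_mul, mul_sub]

theorem FTransform_const
    {X : Type*} [TopologicalSpace X] [T2Space X] [NormalSpace X] [Nonempty X]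
    (Y : Type*) [NormedAddCommGroup Y] [NormedSpace ℝ Y] [CompleteSpace Y]
    (j : Y →ₗ[ℝ] (X →ᵇ ℝ)) (hj : Function.Injective j)
    (hnorm : ∀ φ : Y, ‖j φ‖ ≤ ‖φ‖)
    (hH : ∀ x : X, ∀ U : Set X, IsOpen U → x ∈ U →
      ∃ σ : Y, (∀ y, j σ y ∈ Set.Icc (0 : ℝ) 1) ∧ j σ x = 1 ∧ ∀ y ∉ U, j σ y = 0)
    (c : ℝ) :
    ∃ Δ : X → WeakDual ℝ Y, (∀ (x : X) (φ : Y), Δ x φ = j φ x) ∧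
      (∀ Q ∈ closure (convexHull ℝ (Set.range Δ)),
        FTransform j (fun _ => (c : EReal)) Q = (c : EReal) ∧
        ∀ φ : Y, (Q φ : EReal) ≤ ⨆ x : X, (j φ x : EReal)) ∧
      (∀ Q : WeakDual ℝ Y, Q ∉ closure (convexHull ℝ (Set.range Δ)) →
        FTransform j (fun _ => (c : EReal)) Q = ⊤) :=
  FTransform_const_general Y j hnorm c
end

section
/- With X normal Hausdorff and Y ⊆ C_b(X) a Banach space with ‖·‖ ≥ ‖·‖_∞ satisfying (H): for every bounded below lower semicontinuous f : X → ℝ ∪ {+∞} with nonempty domain, inf_{x∈X} f(x) = min of F(f) over the weak* closure of Δ_Y(X) = min of F(f) over the weak*-closed convex hull of Δ_Y(X), and these minima are attained. -/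
/-!
Testing `φ = 0` gives `F(f)(Q) ≥ inf f` for every `Q`. Conversely, along the filter of points
where `f` is close to its infimum, the Dirac functionals `Δ_Y(x)` lie in the unit ball of `Y*` and
so have a weak* cluster point `Q₁` (Banach–Alaoglu). For each `φ`, `Q₁(φ)` is a cluster value of
`j φ x ≤ f^×(φ) + f(x)`, hence `Q₁(φ) − f^×(φ) ≤ inf f`, i.e. `F(f)(Q₁) ≤ inf f`.
-/

open BoundedContinuousFunction

open Filter Set Topology

theorem comap_nhds_iInf_neBot {ι α : Type*} [Nonempty ι] [CompleteLinearOrder α]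
    [TopologicalSpace α] [OrderTopology α] (f : ι → α) : NeBot (comap f (𝓝 (⨅ i, f i))) :=
  comap_neBot fun t ht => by
    obtain ⟨_, hft, i, rfl⟩ :=
      mem_closure_iff_nhds.1 (isGLB_iInf.mem_closure (range_nonempty f)) t ht
    exact ⟨i, hft⟩

section

variable {X : Type*} [TopologicalSpace X] {Y : Type*} [NormedAddCommGroup Y] [NormedSpace ℝ Y]
  (j : Y →ₗ[ℝ] (X →ᵇ ℝ)) (f : X → EReal)

theorem iInf_le_FTransform (Q : WeakDual ℝ Y) : ⨅ x, f x ≤ FTransform j f Q := by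
  refine le_iSup_of_le 0 ?_
  have hconj : ⨆ x, ((j 0 x : EReal) - f x) ≤ -⨅ x, f x :=
    iSup_le fun x => by simpa using iInf_le f x
  simpa using EReal.sub_le_sub (le_refl ((Q 0 : ℝ) : EReal)) hconj

theorem FTransform_le_limsup {Δ : X → WeakDual ℝ Y}
    (hΔ : ∀ x φ, Δ x φ = j φ x) {l : Filter X} {Q : WeakDual ℝ Y} (hQ : MapClusterPt Q l Δ) :
    FTransform j f Q ≤ limsup f l := by
  refine iSup_le fun φ => EReal.le_of_forall_lt_iff_le.1 fun u hu => ?_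
  set c := ⨆ x, ((j φ x : EReal) - f x)
  have hev : ∀ᶠ x in l, ((Δ x φ : ℝ) : EReal) ∈ Iic (u + c) := by
    filter_upwards [eventually_lt_of_limsup_lt hu] with x hx
    have hsub : ((j φ x : ℝ) : EReal) - u ≤ c :=
      (EReal.sub_le_sub le_rfl hx.le).trans (le_iSup (fun x => ((j φ x : EReal) - f x)) x)
    rw [hΔ, mem_Iic, add_comm]
    exact (EReal.sub_le_iff_le_add (.inl (EReal.coe_ne_bot u)) (.inl (EReal.coe_ne_top u))).1 hsub
  have hcont : Continuous fun Q : WeakDual ℝ Y => ((Q φ : ℝ) : EReal) :=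
    continuous_coe_real_ereal.comp (WeakDual.eval_continuous φ)
  exact EReal.sub_le_of_le_add (isClosed_Iic.mem_of_mapClusterPt
    (hQ.continuousAt_comp hcont.continuousAt) hev)

/-- `Δ_Y(x)` in the paper. -/
noncomputable def diracDual (hnorm : ∀ φ, ‖j φ‖ ≤ ‖φ‖) (x : X) : WeakDual ℝ Y :=
  (evalCLM ℝ x).comp (j.mkContinuous 1 fun φ => by simpa using hnorm φ)

theorem diracDual_apply (hnorm : ∀ φ, ‖j φ‖ ≤ ‖φ‖) (x : X) (φ : Y) :
    diracDual j hnorm x φ = j φ x :=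
  rfl

theorem diracDual_mem_closedBall (hnorm : ∀ φ, ‖j φ‖ ≤ ‖φ‖) (x : X) :
    WeakDual.toStrongDual (diracDual j hnorm x) ∈ Metric.closedBall 0 1 := by
  rw [mem_closedBall_zero_iff]
  refine ContinuousLinearMap.opNorm_le_bound _ zero_le_one fun φ => ?_
  simpa [diracDual_apply] using ((j φ).norm_coe_le_norm x).trans (hnorm φ)

/-- Banach–Alaoglu. -/
theorem exists_mapClusterPt_diracDual (hnorm : ∀ φ, ‖j φ‖ ≤ ‖φ‖)
    (l : Filter X) [NeBot l] : ∃ Q, MapClusterPt Q l (diracDual j hnorm) := by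
  obtain ⟨Q, -, hQ⟩ := (WeakDual.isCompact_closedBall (0 : StrongDual ℝ Y) 1).exists_mapClusterPt
    (f := l) (tendsto_principal.2 (Eventually.of_forall (diracDual_mem_closedBall j hnorm)))
  exact ⟨Q, hQ⟩

end

theorem FTransform_preserves_inf_general
    {X : Type*} [TopologicalSpace X]
    (Y : Type*) [NormedAddCommGroup Y] [NormedSpace ℝ Y]
    (j : Y →ₗ[ℝ] (X →ᵇ ℝ))
    (hnorm : ∀ φ : Y, ‖j φ‖ ≤ ‖φ‖)
    (f : X → EReal)
    (hdom : ∃ x, f x ≠ ⊤) :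
    ∃ Δ : X → WeakDual ℝ Y, (∀ (x : X) (φ : Y), Δ x φ = j φ x) ∧
      -- minimum attained on the weak* closure of Δ(X), with value inf f
      (∃ Q₁ ∈ closure (Set.range Δ), FTransform j f Q₁ = (⨅ x : X, f x) ∧
        ∀ Q ∈ closure (Set.range Δ), FTransform j f Q₁ ≤ FTransform j f Q) ∧
      -- minimum attained on the weak*-closed convex hull of Δ(X), with value inf f
      (∃ Q₂ ∈ closure (convexHull ℝ (Set.range Δ)), FTransform j f Q₂ = (⨅ x : X, f x) ∧
        ∀ Q ∈ closure (convexHull ℝ (Set.range Δ)), FTransform j f Q₂ ≤ FTransform j f Q) := by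
  have : Nonempty X := hdom.nonempty
  have := comap_nhds_iInf_neBot f
  set Δ := diracDual j hnorm
  obtain ⟨Q₁, hQ₁⟩ := exists_mapClusterPt_diracDual j hnorm (comap f (𝓝 (⨅ x, f x)))
  have hmin : FTransform j f Q₁ = ⨅ x, f x :=
    le_antisymm ((FTransform_le_limsup j f (diracDual_apply j hnorm) hQ₁).trans
      tendsto_comap.limsup_eq.le) (iInf_le_FTransform j f Q₁)
  have hmem : Q₁ ∈ closure (range Δ) :=
    isClosed_closure.mem_of_mapClusterPt hQ₁ (Eventually.of_forall fun x =>
      subset_closure (mem_range_self x))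
  exact ⟨Δ, diracDual_apply j hnorm,
    ⟨Q₁, hmem, hmin, fun Q _ => hmin.trans_le (iInf_le_FTransform j f Q)⟩,
    ⟨Q₁, closure_mono (subset_convexHull ℝ _) hmem, hmin,
      fun Q _ => hmin.trans_le (iInf_le_FTransform j f Q)⟩⟩

theorem FTransform_preserves_inf
    {X : Type*} [TopologicalSpace X] [T2Space X] [NormalSpace X]
    (Y : Type*) [NormedAddCommGroup Y] [NormedSpace ℝ Y] [CompleteSpace Y]
    (j : Y →ₗ[ℝ] (X →ᵇ ℝ)) (hj : Function.Injective j)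
    (hnorm : ∀ φ : Y, ‖j φ‖ ≤ ‖φ‖)
    (hH : ∀ x : X, ∀ U : Set X, IsOpen U → x ∈ U →
      ∃ σ : Y, (∀ y, j σ y ∈ Set.Icc (0 : ℝ) 1) ∧ j σ x = 1 ∧ ∀ y ∉ U, j σ y = 0)
    (f : X → EReal) (hf : LowerSemicontinuous f)
    (hbdd : ∃ m : ℝ, ∀ x, (m : EReal) ≤ f x) (hdom : ∃ x, f x ≠ ⊤) :
    ∃ Δ : X → WeakDual ℝ Y, (∀ (x : X) (φ : Y), Δ x φ = j φ x) ∧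
      -- minimum attained on the weak* closure of Δ(X), with value inf f
      (∃ Q₁ ∈ closure (Set.range Δ), FTransform j f Q₁ = (⨅ x : X, f x) ∧
        ∀ Q ∈ closure (Set.range Δ), FTransform j f Q₁ ≤ FTransform j f Q) ∧
      -- minimum attained on the weak*-closed convex hull of Δ(X), with value inf f
      (∃ Q₂ ∈ closure (convexHull ℝ (Set.range Δ)), FTransform j f Q₂ = (⨅ x : X, f x) ∧
        ∀ Q ∈ closure (convexHull ℝ (Set.range Δ)), FTransform j f Q₂ ≤ FTransform j f Q) :=
  FTransform_preserves_inf_general Y j hnorm f hdom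
end

section
/- Let X be a normal Hausdorff space and f, g : X → ℝ bounded from below and lower semicontinuous, everywhere finite. Then A(f+g) = A(f) + A(g), where A(h) := {φ ∈ C_b(X) : φ ≤ h}. That is, every bounded continuous φ ≤ f + g splits as φ = ψ₁ + ψ₂ with ψ₁, ψ₂ ∈ C_b(X), ψ₁ ≤ f, ψ₂ ≤ g. -/
open BoundedContinuousFunction
open Pointwise

/-!
A bounded continuous `φ ≤ f + g` splits as `ψ + (φ - ψ)` with both summands admissible exactly
when `φ - g ≤ ψ ≤ f`. Since `φ - g` is upper and `f` lower semicontinuous, such a `ψ ∈ C_b(X)`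
is supplied by the Katětov–Tong insertion theorem; the lower bounds on `f` and `g` make
`φ - g` bounded above and `f` bounded below, which is all the bounded version needs.

Katětov–Tong is proved by successive approximation. On a grid of mesh `δ`, Urysohn functions
that switch from `0` to `1` between `{v ≤ m + iδ}` and `{u ≥ m + (i+1)δ}` add up to a function
within `δ` of the band `[u, v]`. Applying this to the narrowed band
`[max u (h - ε), min v (h + ε)]` with mesh `ε / 2` moves an `ε`-approximation `h` by at most
`3ε/2`, so the approximations form a Cauchy sequence in `C_b(X)` whose limit lies in `[u, v]`.
-/

open Filter Set

theorem min_sub_le_mul_sum_range {a : ℕ → ℝ} {δ s : ℝ} (hδ : 0 ≤ δ) (ha : ∀ i, 0 ≤ a i)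
    (ha_one : ∀ i : ℕ, (i + 1) * δ ≤ s → a i = 1) (N : ℕ) :
    min (s - δ) (N * δ) ≤ δ * ∑ i ∈ Finset.range N, a i := by
  induction N with
  | zero => simp
  | succ N ih =>
    rw [Finset.sum_range_succ, mul_add, Nat.cast_succ]
    by_cases hs : (N + 1) * δ ≤ s
    · rw [min_eq_right (by linarith)] at ih
      rw [ha_one N hs]
      linarith [min_le_right (s - δ) ((N + 1) * δ)]
    · rw [min_eq_left (by linarith)] at ih
      linarith [min_le_left (s - δ) ((N + 1) * δ), mul_nonneg hδ (ha N)]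

theorem mul_sum_range_le_min_add {a : ℕ → ℝ} {δ s : ℝ} (hδ : 0 ≤ δ) (hs : 0 ≤ s)
    (ha : ∀ i, a i ≤ 1) (ha_zero : ∀ i : ℕ, s ≤ i * δ → a i = 0) (N : ℕ) :
    δ * ∑ i ∈ Finset.range N, a i ≤ min (s + δ) (N * δ) := by
  induction N with
  | zero => simpa using add_nonneg hs hδ
  | succ N ih =>
    rw [Finset.sum_range_succ, mul_add, Nat.cast_succ]
    by_cases hsN : s ≤ N * δ
    · rw [ha_zero N hsN, mul_zero, add_zero]
      exact ih.trans (min_le_min le_rfl (by linarith))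
    · have := ih.trans (min_le_right _ _)
      exact le_min (by nlinarith [ha N]) (by nlinarith [ha N])

theorem le_of_forall_le_add_div_two_pow {a b C : ℝ} (h : ∀ n : ℕ, a ≤ b + C / 2 ^ n) :
    a ≤ b := by
  have hlim : Tendsto (fun n : ℕ => b + C / 2 ^ n) atTop (nhds (b + 0)) :=
    tendsto_const_nhds.add ((tendsto_pow_atTop_atTop_of_one_lt one_lt_two).const_div_atTop C)
  simpa using ge_of_tendsto' hlim h

namespace BoundedContinuousFunction

variable {X : Type*} [TopologicalSpace X] [NormalSpace X] {u v : X → ℝ}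

theorem exists_approx_between (hu : UpperSemicontinuous u) (hv : LowerSemicontinuous v)
    (huv : u ≤ v) {m M : ℝ} (hM : ∀ x, u x ≤ M) (hm : ∀ x, m ≤ v x) {δ : ℝ} (hδ : 0 < δ) :
    ∃ h : X →ᵇ ℝ, ∀ x, u x - δ ≤ h x ∧ h x ≤ v x + δ := by
  obtain ⟨N, hN⟩ := exists_nat_ge ((M - m) / δ)
  have hNδ : M - m ≤ N * δ := (div_le_iff₀ hδ).1 hN
  have level (i : ℕ) : ∃ F : X →ᵇ ℝ, EqOn F 0 (v ⁻¹' Iic (m + i * δ)) ∧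
      EqOn F 1 (u ⁻¹' Ici (m + (i + 1) * δ)) ∧ ∀ x, F x ∈ Icc (0 : ℝ) 1 := by
    refine exists_bounded_zero_one_of_closed (hv.isClosed_preimage _) (hu.isClosed_preimage _)
      (Set.disjoint_left.2 fun x hvx hux => ?_)
    have := huv x
    simp only [mem_preimage, mem_Iic, mem_Ici] at hvx hux
    linarith
  choose F hF0 hF1 hF01 using level
  refine ⟨const X m + δ • ∑ i ∈ Finset.range N, F i, fun x => ?_⟩
  have lower := min_sub_le_mul_sum_range (s := u x - m) hδ.le (fun i => (hF01 i x).1)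
    (fun i hi => hF1 i (show m + (i + 1) * δ ≤ u x by linarith)) N
  have upper := mul_sum_range_le_min_add (s := v x - m) hδ.le (by linarith [hm x])
    (fun i => (hF01 i x).2) (fun i hi => hF0 i (show v x ≤ m + i * δ by linarith)) N
  rw [min_eq_left (by linarith [hM x])] at lower
  simp only [coe_add, coe_smul, coe_sum, Pi.add_apply, const_apply', Finset.sum_apply,
    smul_eq_mul]
  constructor <;> linarith [min_le_left (v x - m + δ) (N * δ)]

theorem exists_approx_between_half (hu : UpperSemicontinuous u) (hv : LowerSemicontinuous v)
    (huv : u ≤ v) {h : X →ᵇ ℝ} {ε : ℝ} (hε : 0 < ε)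
    (hh : ∀ x, u x - ε ≤ h x ∧ h x ≤ v x + ε) :
    ∃ h' : X →ᵇ ℝ, (∀ x, u x - ε / 2 ≤ h' x ∧ h' x ≤ v x + ε / 2) ∧ dist h h' ≤ 3 / 2 * ε := by
  have hle (x : X) : max (u x) (h x - ε) ≤ min (v x) (h x + ε) := by
    obtain ⟨hux, hvx⟩ := hh x
    exact max_le (le_min (huv x) (by linarith)) (le_min (by linarith) (by linarith))
  obtain ⟨h', hh'⟩ := exists_approx_between (u := fun x => max (u x) (h x - ε))
    (v := fun x => min (v x) (h x + ε))
    (hu.sup (h.continuous.sub continuous_const).upperSemicontinuous)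
    (hv.inf (h.continuous.add continuous_const).lowerSemicontinuous) hle (M := ‖h‖ + ε)
    (fun x => (hle x).trans ((min_le_right _ _).trans (by linarith [h.apply_le_norm x])))
    (m := -‖h‖ - ε)
    (fun x => le_trans (by linarith [h.neg_norm_le_apply x]) ((le_max_right _ _).trans (hle x)))
    (half_pos hε)
  refine ⟨h', fun x => ?_, (dist_le (by positivity)).2 fun x => ?_⟩
  · have := hh' x
    constructor <;> linarith [le_max_left (u x) (h x - ε), min_le_left (v x) (h x + ε)]
  · have := hh' x
    rw [Real.dist_eq, abs_le]
    constructor <;> linarith [le_max_right (u x) (h x - ε), min_le_right (v x) (h x + ε)]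

/-- The Katětov–Tong insertion theorem. -/
theorem exists_between_of_semicontinuous (hu : UpperSemicontinuous u) (hv : LowerSemicontinuous v)
    (huv : u ≤ v) {m M : ℝ} (hM : ∀ x, u x ≤ M) (hm : ∀ x, m ≤ v x) :
    ∃ ψ : X →ᵇ ℝ, u ≤ ψ ∧ ⇑ψ ≤ v := by
  obtain ⟨h₀, hh₀⟩ := exists_approx_between hu hv huv hM hm one_pos
  have step (n : ℕ) (h : X →ᵇ ℝ) : ∃ h' : X →ᵇ ℝ,
      (∀ x, u x - 1 / 2 ^ n ≤ h x ∧ h x ≤ v x + 1 / 2 ^ n) →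
      (∀ x, u x - 1 / 2 ^ (n + 1) ≤ h' x ∧ h' x ≤ v x + 1 / 2 ^ (n + 1)) ∧
        dist h h' ≤ 3 / 2 / 2 ^ n := by
    by_cases hh : ∀ x, u x - 1 / 2 ^ n ≤ h x ∧ h x ≤ v x + 1 / 2 ^ n
    · obtain ⟨h', hh', hd⟩ := exists_approx_between_half hu hv huv (by positivity) hh
      refine ⟨h', fun _ => ⟨?_, hd.trans_eq (by ring)⟩⟩
      simpa only [pow_succ, div_div, one_div_mul_one_div] using hh'
    · exact ⟨h, fun hh' => absurd hh' hh⟩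
  choose next hnext using step
  let H : ℕ → X →ᵇ ℝ := fun n => Nat.rec h₀ next n
  have hH (n : ℕ) : ∀ x, u x - 1 / 2 ^ n ≤ H n x ∧ H n x ≤ v x + 1 / 2 ^ n := by
    induction n with
    | zero => simpa [H] using hh₀
    | succ n ih => exact (hnext n (H n) ih).1
  have hdist (n : ℕ) : dist (H n) (H (n + 1)) ≤ 3 / 2 / 2 ^ n := (hnext n (H n) (hH n)).2
  obtain ⟨ψ, hψ⟩ := cauchySeq_tendsto_of_complete (cauchySeq_of_le_geometric_two hdist)
  have hclose (n : ℕ) (x : X) : |H n x - ψ x| ≤ 3 / 2 ^ n :=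
    (dist_coe_le_dist x).trans (dist_le_of_le_geometric_two_of_tendsto hdist hψ n)
  refine ⟨ψ, fun x => le_of_forall_le_add_div_two_pow (C := 4) fun n => ?_,
    fun x => le_of_forall_le_add_div_two_pow (C := 4) fun n => ?_⟩
  all_goals
    obtain ⟨hlow, hupp⟩ := hH n x
    obtain ⟨hψlow, hψupp⟩ := abs_le.1 (hclose n x)
    have : (4 : ℝ) / 2 ^ n = 1 / 2 ^ n + 3 / 2 ^ n := by ring
    linarith

end BoundedContinuousFunction

theorem minorant_set_add_general
    {X : Type*} [TopologicalSpace X] [NormalSpace X]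
    (f g : X → ℝ) (hf : LowerSemicontinuous f) (hg : LowerSemicontinuous g)
    (hfb : ∃ m : ℝ, ∀ x, m ≤ f x) (hgb : ∃ m : ℝ, ∀ x, m ≤ g x) :
    {φ : X →ᵇ ℝ | ∀ x, φ x ≤ f x + g x} =
      {φ : X →ᵇ ℝ | ∀ x, φ x ≤ f x} + {φ : X →ᵇ ℝ | ∀ x, φ x ≤ g x} := by
  obtain ⟨mf, hmf⟩ := hfb
  obtain ⟨mg, hmg⟩ := hgb
  ext φ
  refine ⟨fun hφ => ?_, ?_⟩
  · have husc : UpperSemicontinuous fun x => φ x - g x := by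
      have := φ.continuous.upperSemicontinuous.add hg.neg
      simp only [Pi.neg_apply, ← sub_eq_add_neg] at this
      exact this
    obtain ⟨ψ, hψg, hψf⟩ := exists_between_of_semicontinuous husc hf
      (fun x => sub_le_iff_le_add.2 (hφ x)) (M := ‖φ‖ - mg)
      (fun x => by linarith [φ.apply_le_norm x, hmg x]) hmf
    exact ⟨ψ, hψf, φ - ψ, fun x => sub_le_comm.1 (hψg x), add_sub_cancel ψ φ⟩
  · rintro ⟨ψ₁, hψ₁, ψ₂, hψ₂, rfl⟩ x
    exact add_le_add (hψ₁ x) (hψ₂ x)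

theorem minorant_set_add
    {X : Type*} [TopologicalSpace X] [T2Space X] [NormalSpace X]
    (f g : X → ℝ) (hf : LowerSemicontinuous f) (hg : LowerSemicontinuous g)
    (hfb : ∃ m : ℝ, ∀ x, m ≤ f x) (hgb : ∃ m : ℝ, ∀ x, m ≤ g x) :
    {φ : X →ᵇ ℝ | ∀ x, φ x ≤ f x + g x} =
      {φ : X →ᵇ ℝ | ∀ x, φ x ≤ f x} + {φ : X →ᵇ ℝ | ∀ x, φ x ≤ g x} :=
  minorant_set_add_general f g hf hg hfb hgb
end

section
/- Let X be a normal Hausdorff space and f : X → ℝ ∪ {+∞} bounded from below, lower semicontinuous, with nonempty domain. Then for every ξ ∈ C_b(X): f^×(ξ) = inf{φ^×(ξ) : φ ∈ C_b(X), φ ≤ f}, where h^×(ξ) := sup_{x∈X}(ξ(x) − h(x)). Equivalently, sup_X(ξ − f) = inf_{φ ≤ f, φ ∈ C_b(X)} sup_X(ξ − φ). -/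
open BoundedContinuousFunction

theorem conjugate_eq_inf_of_minorant_conjugates
    {X : Type*} [TopologicalSpace X] [T2Space X] [NormalSpace X]
    (f : X → EReal) (hf : LowerSemicontinuous f)
    (hbdd : ∃ m : ℝ, ∀ x, (m : EReal) ≤ f x) (hdom : ∃ x, f x ≠ ⊤)
    (ξ : X →ᵇ ℝ) :
    (⨆ x : X, ((ξ x : EReal) - f x)) =
      ⨅ φ : {φ : X →ᵇ ℝ // ∀ x, ((φ : X →ᵇ ℝ) x : EReal) ≤ f x},
        ⨆ x : X, ((ξ x - (φ : X →ᵇ ℝ) x : ℝ) : EReal) := by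
  obtain ⟨m, hm⟩ := hbdd
  obtain ⟨x₀, hx₀⟩ := hdom
  set S : EReal := ⨆ x : X, ((ξ x : EReal) - f x) with hS
  have hbot : ∀ x, f x ≠ ⊥ := fun x => ne_bot_of_le_ne_bot (EReal.coe_ne_bot m) (hm x)
  have hStop : S ≠ ⊤ := by
    refine ne_top_of_le_ne_top (EReal.coe_ne_top (‖ξ‖ - m)) (iSup_le fun x => ?_)
    calc ((ξ x : EReal) - f x) ≤ (‖ξ‖ : EReal) - (m : EReal) := by
          apply EReal.sub_le_sub _ (hm x)
          exact_mod_cast (le_abs_self _).trans (ξ.norm_coe_le_norm x)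
      _ = ((‖ξ‖ - m : ℝ) : EReal) := by rw [← EReal.coe_sub]
  have hSbot : S ≠ ⊥ := by
    refine ne_bot_of_le_ne_bot ?_ (le_iSup (fun x => (ξ x : EReal) - f x) x₀)
    lift f x₀ to ℝ using ⟨hx₀, hbot x₀⟩ with r
    rw [← EReal.coe_sub]
    exact EReal.coe_ne_bot _
  set s : ℝ := S.toReal with hs
  have hcoe : (s : EReal) = S := EReal.coe_toReal hStop hSbot
  apply le_antisymm
  · refine le_iInf fun φ => iSup_mono fun x => ?_
    rw [EReal.coe_sub]
    exact EReal.sub_le_sub le_rfl (φ.2 x)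
  · -- the minorant ξ - s
    have hφle : ∀ x, (((ξ - BoundedContinuousFunction.const X s) x : ℝ) : EReal) ≤ f x := by
      intro x
      have h1 : ((ξ x : EReal) - f x) ≤ S := le_iSup (fun x => (ξ x : EReal) - f x) x
      rcases eq_or_ne (f x) ⊤ with h | h
      · rw [h]; exact le_top
      · lift f x to ℝ using ⟨h, hbot x⟩ with r hr
        rw [← hcoe, ← EReal.coe_sub] at h1
        have : ξ x - r ≤ s := EReal.coe_le_coe_iff.mp h1
        simp only [BoundedContinuousFunction.coe_sub, BoundedContinuousFunction.const_apply,
          Pi.sub_apply]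
        exact_mod_cast (by linarith : ξ x - s ≤ r)
    refine (iInf_le _ ⟨ξ - BoundedContinuousFunction.const X s, hφle⟩).trans ?_
    haveI : Nonempty X := ⟨x₀⟩
    refine iSup_le fun x => ?_
    simp only [BoundedContinuousFunction.coe_sub, BoundedContinuousFunction.const_apply,
      Pi.sub_apply]
    rw [show ξ x - (ξ x - s) = s by ring, hcoe]
end

section
/- Let X be a normal Hausdorff space and f, g : X → ℝ bounded from below and lower semicontinuous (finite-valued). Then (f+g)^× = f^× ◇ g^× on C_b(X), i.e. for all θ ∈ C_b(X): sup_{x∈X}(θ(x) − f(x) − g(x)) = inf_{ξ∈C_b(X)} [ sup_{x}(ξ(x) − f(x)) + sup_{x}(θ(x) − ξ(x) − g(x)) ]. -/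
open BoundedContinuousFunction

/-- Approximate Katětov–Tong insertion: if `u ≤ v`, `u` has closed superlevel sets,
`v` has closed sublevel sets, `m ≤ u` and `v ≤ M`, then for every `ε > 0` there is a
bounded continuous `ξ` with `u - ε ≤ ξ ≤ v + ε`. -/
lemma approx_insertion {X : Type*} [TopologicalSpace X] [NormalSpace X]
    (u v : X → ℝ) (hu : ∀ t : ℝ, IsClosed {x | t ≤ u x})
    (hv : ∀ t : ℝ, IsClosed {x | v x ≤ t})
    (huv : ∀ x, u x ≤ v x) (m M : ℝ) (hm : ∀ x, m ≤ u x) (hM : ∀ x, v x ≤ M)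
    {ε : ℝ} (hε : 0 < ε) :
    ∃ ξ : X →ᵇ ℝ, (∀ x, u x - ε ≤ ξ x) ∧ (∀ x, ξ x ≤ v x + ε) := by
  classical
  obtain ⟨N, hN⟩ := exists_nat_gt ((M - m) / ε)
  have hMN : M ≤ m + N * ε := by
    have := (div_lt_iff₀ hε).1 hN
    linarith
  have hdisj : ∀ i : ℕ, Disjoint {x | v x ≤ m + i * ε} {x | m + (i + 1) * ε ≤ u x} := by
    intro i
    rw [Set.disjoint_left]
    intro x hx1 hx2
    simp only [Set.mem_setOf_eq] at hx1 hx2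
    have := huv x
    push_cast at hx2
    nlinarith
  choose φ hφ0 hφ1 hφmem using fun i : ℕ =>
    exists_continuous_zero_one_of_isClosed (hv (m + i * ε)) (hu (m + (i + 1) * ε)) (hdisj i)
  set F : X → ℝ := fun x => m + ε * ∑ i ∈ Finset.range N, φ i x with hF
  have hFcont : Continuous F := by
    apply continuous_const.add
    exact continuous_const.mul (continuous_finset_sum _ fun i _ => (φ i).continuous)
  have hφ01 : ∀ i x, (0:ℝ) ≤ φ i x ∧ φ i x ≤ 1 := fun i x => ⟨(hφmem i x).1, (hφmem i x).2⟩
  have hsum_nonneg : ∀ x, (0:ℝ) ≤ ∑ i ∈ Finset.range N, φ i x := fun x =>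
    Finset.sum_nonneg fun i _ => (hφ01 i x).1
  have hsum_le : ∀ x, ∑ i ∈ Finset.range N, φ i x ≤ N := by
    intro x
    calc ∑ i ∈ Finset.range N, φ i x ≤ ∑ _i ∈ Finset.range N, (1:ℝ) :=
          Finset.sum_le_sum fun i _ => (hφ01 i x).2
      _ = N := by simp
  have hFbound : ∀ x, ‖F x‖ ≤ |m| + N * ε := by
    intro x
    have hFx : F x = m + ε * ∑ i ∈ Finset.range N, φ i x := rfl
    rw [Real.norm_eq_abs, abs_le]
    constructor
    · have h0 : (0:ℝ) ≤ ε * ∑ i ∈ Finset.range N, φ i x :=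
        mul_nonneg hε.le (hsum_nonneg x)
      have h1 : -|m| ≤ m := neg_abs_le m
      have h2 : (0:ℝ) ≤ N * ε := by positivity
      linarith [hFx]
    · have h0 : ε * ∑ i ∈ Finset.range N, φ i x ≤ ε * N :=
        mul_le_mul_of_nonneg_left (hsum_le x) hε.le
      have h1 : m ≤ |m| := le_abs_self m
      nlinarith [hFx]
  refine ⟨BoundedContinuousFunction.ofNormedAddCommGroup F hFcont (|m| + N * ε) hFbound,
    ?_, ?_⟩
  · -- lower bound : u x - ε ≤ F x
    intro x
    simp only [BoundedContinuousFunction.coe_ofNormedAddCommGroup]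
    set k : ℕ := min N ⌊(u x - m) / ε⌋₊ with hk
    have hdivnn : (0:ℝ) ≤ (u x - m) / ε := div_nonneg (by linarith [hm x]) hε.le
    have hk_le_floor : (k:ℝ) ≤ (u x - m) / ε := by
      calc (k:ℝ) ≤ (⌊(u x - m) / ε⌋₊ : ℝ) := by exact_mod_cast Nat.cast_le.2 (min_le_right _ _)
        _ ≤ (u x - m) / ε := Nat.floor_le hdivnn
    have hk1 : m + k * ε ≤ u x := by
      have := (le_div_iff₀ hε).1 hk_le_floor
      linarith
    have hk2 : u x - ε ≤ m + k * ε := by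
      rcases le_or_gt N ⌊(u x - m) / ε⌋₊ with h | h
      · have hkN : k = N := min_eq_left h
        have := hM x
        have := huv x
        rw [hkN]
        linarith
      · have hkf : k = ⌊(u x - m) / ε⌋₊ := min_eq_right h.le
        have hlt : (u x - m) / ε < ⌊(u x - m) / ε⌋₊ + 1 := Nat.lt_floor_add_one _
        have := (div_lt_iff₀ hε).1 hlt
        rw [hkf]
        push_cast at this ⊢
        linarith
    have hone : ∀ i ∈ Finset.range k, φ i x = 1 := by
      intro i hi
      rw [Finset.mem_range] at hi
      apply hφ1 i
      show m + (i + 1) * ε ≤ u x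
      have hik : ((i:ℝ) + 1) ≤ (k:ℝ) := by exact_mod_cast Nat.succ_le_of_lt hi
      nlinarith
    have hge : (k:ℝ) ≤ ∑ i ∈ Finset.range N, φ i x := by
      calc (k:ℝ) = ∑ i ∈ Finset.range k, φ i x := by
            rw [Finset.sum_congr rfl hone]; simp
        _ ≤ ∑ i ∈ Finset.range N, φ i x := by
            apply Finset.sum_le_sum_of_subset_of_nonneg
            · exact Finset.range_subset_range.2 (min_le_left _ _)
            · intro i _ _; exact (hφ01 i x).1
    have : m + k * ε ≤ F x := by
      rw [hF]
      have := mul_le_mul_of_nonneg_left hge hε.le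
      dsimp only
      linarith
    linarith
  · -- upper bound : F x ≤ v x + ε
    intro x
    simp only [BoundedContinuousFunction.coe_ofNormedAddCommGroup]
    set j : ℕ := ⌈(v x - m) / ε⌉₊ with hj
    have hdivnn : (0:ℝ) ≤ (v x - m) / ε := div_nonneg (by linarith [hm x, huv x]) hε.le
    have hj1 : v x ≤ m + j * ε := by
      have := Nat.le_ceil ((v x - m) / ε)
      have := (div_le_iff₀ hε).1 this
      linarith
    have hj2 : m + j * ε ≤ v x + ε := by
      have hlt : (⌈(v x - m) / ε⌉₊ : ℝ) < (v x - m) / ε + 1 := Nat.ceil_lt_add_one hdivnn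
      have := (lt_div_iff₀ hε).1 (by linarith : ((j:ℝ) - 1) < (v x - m) / ε)
      nlinarith
    have hzero : ∀ i : ℕ, j ≤ i → φ i x = 0 := by
      intro i hi
      apply hφ0 i
      show v x ≤ m + i * ε
      have : (j:ℝ) ≤ (i:ℝ) := by exact_mod_cast hi
      nlinarith
    have hsle : ∑ i ∈ Finset.range N, φ i x ≤ (j:ℝ) := by
      calc ∑ i ∈ Finset.range N, φ i x
          ≤ ∑ i ∈ Finset.range N, (if i < j then (1:ℝ) else 0) := by
            apply Finset.sum_le_sum
            intro i _
            by_cases hij : i < j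
            · simp [hij, (hφ01 i x).2]
            · simp [hij, hzero i (le_of_not_gt hij)]
        _ = (((Finset.range N).filter (· < j)).card : ℝ) := by
            rw [Finset.sum_ite, Finset.sum_const, Finset.sum_const]
            simp
        _ ≤ (j:ℝ) := by
            have hsub : (Finset.range N).filter (· < j) ⊆ Finset.range j := by
              intro i hi
              rw [Finset.mem_filter] at hi
              exact Finset.mem_range.2 hi.2
            have := Finset.card_le_card hsub
            rw [Finset.card_range] at this
            exact_mod_cast this
    have : F x ≤ m + ε * j := by
      rw [hF]
      have := mul_le_mul_of_nonneg_left hsle hε.le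
      dsimp only
      linarith
    linarith [hj2, this]

theorem conjugate_add_eq_infConv
    {X : Type*} [TopologicalSpace X] [T2Space X] [NormalSpace X]
    (f g : X → ℝ) (hf : LowerSemicontinuous f) (hg : LowerSemicontinuous g)
    (hfb : ∃ m : ℝ, ∀ x, m ≤ f x) (hgb : ∃ m : ℝ, ∀ x, m ≤ g x)
    (θ : X →ᵇ ℝ) :
    (⨆ x : X, ((θ x - f x - g x : ℝ) : EReal)) =
      ⨅ ξ : X →ᵇ ℝ,
        ((⨆ x : X, ((ξ x - f x : ℝ) : EReal)) +
          ⨆ x : X, ((θ x - ξ x - g x : ℝ) : EReal)) := by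
  obtain ⟨mf, hmf⟩ := hfb
  obtain ⟨mg, hmg⟩ := hgb
  rcases isEmpty_or_nonempty X with hX | hX
  · simp only [iSup_of_empty]
    rw [show ((⊥:EReal) + ⊥) = ⊥ by simp, iInf_const]
  · -- X nonempty
    have hθ : ∀ x, |θ x| ≤ ‖θ‖ := fun x => by
      simpa [Real.norm_eq_abs] using θ.norm_coe_le_norm x
    have hbdd : BddAbove (Set.range fun x : X => θ x - f x - g x) := by
      refine ⟨‖θ‖ - mf - mg, ?_⟩
      rintro _ ⟨x, rfl⟩
      dsimp only
      have := (abs_le.1 (hθ x)).2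
      have := hmf x; have := hmg x
      linarith
    set s : ℝ := ⨆ x : X, (θ x - f x - g x) with hs
    have hub : ∀ x, θ x - f x - g x ≤ s := fun x => le_ciSup hbdd x
    apply le_antisymm
    · -- easy direction
      apply le_iInf
      intro ξ
      apply iSup_le
      intro x
      have heq : ((θ x - f x - g x : ℝ) : EReal)
          = ((ξ x - f x : ℝ) : EReal) + ((θ x - ξ x - g x : ℝ) : EReal) := by
        rw [← EReal.coe_add]
        norm_cast
        ring
      rw [heq]
      exact add_le_add (le_iSup (fun x : X => ((ξ x - f x : ℝ) : EReal)) x) (le_iSup (fun x : X => ((θ x - ξ x - g x : ℝ) : EReal)) x)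
    · -- hard direction
      have key : ∀ ε : ℝ, 0 < ε →
          (⨅ ξ : X →ᵇ ℝ,
            ((⨆ x : X, ((ξ x - f x : ℝ) : EReal)) +
              ⨆ x : X, ((θ x - ξ x - g x : ℝ) : EReal)))
            ≤ ((s + 2 * ε : ℝ) : EReal) := by
        intro ε hε
        set M : ℝ := max mf (‖θ‖ - mg - s) with hM
        set u : X → ℝ := fun x => max (θ x - g x - s) mf with hu
        set v : X → ℝ := fun x => min (f x) M with hv
        have hucl : ∀ t : ℝ, IsClosed {x | t ≤ u x} := by
          intro t
          have h1 : IsClosed {x : X | g x + (-θ x) ≤ -s - t} := by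
            have hlsc : LowerSemicontinuous fun x : X => g x + (-θ x) :=
              hg.add (θ.continuous.neg.lowerSemicontinuous)
            exact hlsc.isClosed_preimage (-s - t)
          have h2 : IsClosed {x : X | t ≤ mf} := by
            by_cases ht : t ≤ mf
            · convert isClosed_univ using 1
              ext x; simp [ht]
            · convert isClosed_empty using 1
              ext x; simp [ht]
          have : {x : X | t ≤ u x} = {x : X | g x + (-θ x) ≤ -s - t} ∪ {x : X | t ≤ mf} := by
            ext x
            simp only [hu, Set.mem_setOf_eq, Set.mem_union, le_max_iff]
            constructor
            · rintro (h | h)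
              · left; linarith
              · right; exact h
            · rintro (h | h)
              · left; linarith
              · right; exact h
          rw [this]
          exact h1.union h2
        have hvcl : ∀ t : ℝ, IsClosed {x | v x ≤ t} := by
          intro t
          have h1 : IsClosed {x : X | f x ≤ t} := hf.isClosed_preimage t
          have h2 : IsClosed {x : X | M ≤ t} := by
            by_cases ht : M ≤ t
            · convert isClosed_univ using 1
              ext x; simp [ht]
            · convert isClosed_empty using 1
              ext x; simp [ht]
          have : {x : X | v x ≤ t} = {x : X | f x ≤ t} ∪ {x : X | M ≤ t} := by
            ext x
            simp only [hv, Set.mem_setOf_eq, Set.mem_union, min_le_iff]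
          rw [this]
          exact h1.union h2
        have huv : ∀ x, u x ≤ v x := by
          intro x
          have h1 : θ x - g x - s ≤ f x := by have := hub x; linarith
          have h2 : θ x - g x - s ≤ M := by
            have := (abs_le.1 (hθ x)).2
            have := hmg x
            have : θ x - g x - s ≤ ‖θ‖ - mg - s := by linarith
            exact this.trans (le_max_right _ _)
          have h3 : mf ≤ f x := hmf x
          have h4 : mf ≤ M := le_max_left _ _
          exact max_le (le_min h1 h2) (le_min h3 h4)
        have hml : ∀ x, mf ≤ u x := fun x => le_max_right _ _
        have hMu : ∀ x, v x ≤ M := fun x => min_le_right _ _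
        obtain ⟨ξ, hξ1, hξ2⟩ := approx_insertion u v hucl hvcl huv mf M hml hMu hε
        refine iInf_le_of_le ξ ?_
        have A : (⨆ x : X, ((ξ x - f x : ℝ) : EReal)) ≤ ((ε : ℝ) : EReal) := by
          apply iSup_le
          intro x
          rw [EReal.coe_le_coe_iff]
          have h1 := hξ2 x
          have h2 : v x ≤ f x := min_le_left _ _
          linarith
        have B : (⨆ x : X, ((θ x - ξ x - g x : ℝ) : EReal)) ≤ ((s + ε : ℝ) : EReal) := by
          apply iSup_le
          intro x
          rw [EReal.coe_le_coe_iff]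
          have h1 := hξ1 x
          have h2 : θ x - g x - s ≤ u x := le_max_left _ _
          linarith
        calc (⨆ x : X, ((ξ x - f x : ℝ) : EReal)) +
              ⨆ x : X, ((θ x - ξ x - g x : ℝ) : EReal)
            ≤ ((ε : ℝ) : EReal) + ((s + ε : ℝ) : EReal) := add_le_add A B
          _ = ((s + 2 * ε : ℝ) : EReal) := by
              rw [← EReal.coe_add]; norm_cast; ring
      have h1 : (⨅ ξ : X →ᵇ ℝ,
            ((⨆ x : X, ((ξ x - f x : ℝ) : EReal)) +
              ⨆ x : X, ((θ x - ξ x - g x : ℝ) : EReal))) ≤ ((s : ℝ) : EReal) := by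
        by_contra h
        have hlt : ((s : ℝ) : EReal) < _ := lt_of_not_ge h
        obtain ⟨z, hz1, hz2⟩ := EReal.exists_between_coe_real hlt
        have hzs : s < z := EReal.coe_lt_coe_iff.1 hz1
        have hεpos : 0 < (z - s) / 2 := by linarith
        have := key ((z - s) / 2) hεpos
        have : (⨅ ξ : X →ᵇ ℝ,
            ((⨆ x : X, ((ξ x - f x : ℝ) : EReal)) +
              ⨆ x : X, ((θ x - ξ x - g x : ℝ) : EReal))) ≤ ((z : ℝ) : EReal) := by
          convert this using 2
          ring
        exact absurd (lt_of_le_of_lt this hz2) (lt_irrefl _)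
      have h2 : ((s : ℝ) : EReal) ≤ ⨆ x : X, ((θ x - f x - g x : ℝ) : EReal) := by
        by_contra h
        have hlt : (⨆ x : X, ((θ x - f x - g x : ℝ) : EReal)) < ((s : ℝ) : EReal) :=
          lt_of_not_ge h
        obtain ⟨z, hz1, hz2⟩ := EReal.exists_between_coe_real hlt
        have hzs : z < s := EReal.coe_lt_coe_iff.1 hz2
        obtain ⟨_, ⟨x, rfl⟩, hx⟩ := exists_lt_of_lt_csSup (Set.range_nonempty _) hzs
        have : ((z : ℝ) : EReal) < ((θ x - f x - g x : ℝ) : EReal) := EReal.coe_lt_coe_iff.2 hx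
        have hle : ((θ x - f x - g x : ℝ) : EReal)
            ≤ ⨆ x : X, ((θ x - f x - g x : ℝ) : EReal) :=
          le_iSup (fun x : X => ((θ x - f x - g x : ℝ) : EReal)) x
        exact absurd (lt_of_lt_of_le this (hle.trans hz1.le)) (lt_irrefl _)
      exact h1.trans h2
end

section
/- Let X be a topological space and φ, ψ ∈ C_b(X). Then (φ + ψ)^× = φ^× ◇ ψ^× on C_b(X): for all θ ∈ C_b(X), sup_x(θ(x) − φ(x) − ψ(x)) = inf_{ξ∈C_b(X)}[sup_x(ξ(x) − φ(x)) + sup_x(θ(x) − ξ(x) − ψ(x))]. -/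
open BoundedContinuousFunction

/-! Weak duality holds for every `ξ` because `θ - φ - ψ = (ξ - φ) + (θ - ξ - ψ)` pointwise and a
supremum of a sum is at most the sum of the suprema; the infimum is attained at `ξ = θ - ψ`, which
is again bounded continuous and makes the second supremum at most `0`. -/

lemma iSup_sub_sub_le_iSup_sub_add_iSup_sub {ι : Type*} (φ ψ θ ξ : ι → ℝ) :
    (⨆ x, ((θ x - φ x - ψ x : ℝ) : EReal)) ≤
      (⨆ x, ((ξ x - φ x : ℝ) : EReal)) + ⨆ x, ((θ x - ξ x - ψ x : ℝ) : EReal) := by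
  have hsplit : (fun x => ((θ x - φ x - ψ x : ℝ) : EReal)) =
      (fun x => ((ξ x - φ x : ℝ) : EReal)) + fun x => ((θ x - ξ x - ψ x : ℝ) : EReal) := by
    funext x
    rw [Pi.add_apply, ← EReal.coe_add]
    ring_nf
  rw [hsplit]
  exact EReal.iSup_add_le_add_iSup

lemma iSup_sub_add_iSup_sub_le_of_eq_sub {ι : Type*} (φ ψ θ ξ : ι → ℝ)
    (hξ : ∀ x, ξ x = θ x - ψ x) :
    (⨆ x, ((ξ x - φ x : ℝ) : EReal)) + (⨆ x, ((θ x - ξ x - ψ x : ℝ) : EReal)) ≤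
      ⨆ x, ((θ x - φ x - ψ x : ℝ) : EReal) := by
  have hfirst : (⨆ x, ((ξ x - φ x : ℝ) : EReal)) = ⨆ x, ((θ x - φ x - ψ x : ℝ) : EReal) := by
    congr 1
    funext x
    rw [hξ, sub_right_comm]
  have hsecond : (⨆ x, ((θ x - ξ x - ψ x : ℝ) : EReal)) ≤ 0 :=
    iSup_le fun x => by simp [hξ]
  calc (⨆ x, ((ξ x - φ x : ℝ) : EReal)) + (⨆ x, ((θ x - ξ x - ψ x : ℝ) : EReal))
      ≤ (⨆ x, ((θ x - φ x - ψ x : ℝ) : EReal)) + 0 := by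
        rw [hfirst]
        exact add_le_add_right hsecond _
    _ = ⨆ x, ((θ x - φ x - ψ x : ℝ) : EReal) := add_zero _

theorem conjugate_add_eq_infConv_of_bounded_continuous
    {X : Type*} [TopologicalSpace X] (φ ψ θ : X →ᵇ ℝ) :
    (⨆ x : X, ((θ x - φ x - ψ x : ℝ) : EReal)) =
      ⨅ ξ : X →ᵇ ℝ,
        ((⨆ x : X, ((ξ x - φ x : ℝ) : EReal)) +
          ⨆ x : X, ((θ x - ξ x - ψ x : ℝ) : EReal)) :=
  le_antisymm
    (le_iInf fun ξ => iSup_sub_sub_le_iSup_sub_add_iSup_sub φ ψ θ ξ)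
    (iInf_le_of_le (θ - ψ) <|
      iSup_sub_add_iSup_sub_le_of_eq_sub φ ψ θ (θ - ψ) fun _ => sub_apply θ ψ)
end

section
/- Let X be a topological space and ∅ ≠ A ⊆ C_b(X). Then A is a Δ-set (i.e., A = ⋂_{x∈X}{φ ∈ C_b(X) : φ(x) ≤ λ_x} for some family of reals (λ_x)) if and only if there exists a bounded from below lower semicontinuous function f : X → ℝ with A = {ψ ∈ C_b(X) : ψ ≤ f}. -/
open BoundedContinuousFunction

theorem delta_set_iff_minorant_set
    {X : Type*} [TopologicalSpace X] (A : Set (X →ᵇ ℝ)) (hA : A.Nonempty) :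
    (∃ lam : X → ℝ, A = {φ : X →ᵇ ℝ | ∀ x, φ x ≤ lam x}) ↔
      ∃ f : X → ℝ, (∃ m : ℝ, ∀ x, m ≤ f x) ∧ LowerSemicontinuous f ∧
        A = {ψ : X →ᵇ ℝ | ∀ x, ψ x ≤ f x} := by
  constructor
  · rintro ⟨lam, rfl⟩
    obtain ⟨φ₀, hφ₀⟩ := hA
    haveI : Nonempty {φ : X →ᵇ ℝ // ∀ x, φ x ≤ lam x} := ⟨⟨φ₀, hφ₀⟩⟩
    set f : X → ℝ := fun x => ⨆ φ : {φ : X →ᵇ ℝ // ∀ x, φ x ≤ lam x}, (φ : X →ᵇ ℝ) x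
      with hf
    have hbdd : ∀ x, BddAbove (Set.range fun φ : {φ : X →ᵇ ℝ // ∀ x, φ x ≤ lam x} =>
        (φ : X →ᵇ ℝ) x) := by
      intro x
      exact ⟨lam x, by rintro y ⟨φ, rfl⟩; exact φ.2 x⟩
    refine ⟨f, ⟨-‖φ₀‖, fun x => ?_⟩, ?_, ?_⟩
    · have h1 : -‖φ₀‖ ≤ φ₀ x := neg_le_of_abs_le (φ₀.norm_coe_le_norm x)
      exact h1.trans (le_ciSup (hbdd x) ⟨φ₀, hφ₀⟩)
    · exact lowerSemicontinuous_ciSup hbdd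
        (fun φ => ((φ : X →ᵇ ℝ).continuous.lowerSemicontinuous))
    · ext ψ
      simp only [Set.mem_setOf_eq]
      constructor
      · intro h x
        exact le_ciSup (hbdd x) ⟨ψ, h⟩
      · intro h x
        exact (h x).trans (ciSup_le fun φ => φ.2 x)
  · rintro ⟨f, _, _, rfl⟩
    exact ⟨f, rfl⟩
end

section
/- Let X be a normal Hausdorff space and f : X → ℝ ∪ {+∞} bounded from below, lower semicontinuous, with nonempty domain. Then for every Q in the weak*-closed convex hull of Δ(X) in (C_b(X))*: F(f)(Q) = sup{Q(φ) : φ ∈ C_b(X), φ ≤ f}, i.e. the second conjugate (f^×)* coincides with the support function of A(f) := {φ ∈ C_b(X) : φ ≤ f} on co̅^{w*}(Δ(X)). -/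
/-!
A linear functional `Q` with `Q 1 = 1` satisfies `Q (φ - r) = Q φ - r`. If `f^×(φ) = r` is finite
then `φ - r ≤ f` and `Q φ - f^×(φ) = Q (φ - r)`; if `f^×(φ) = -∞` then `f ≡ +∞`, so every constant
lies below `f` and both sides are `+∞`; conversely `φ ≤ f` gives `f^×(φ) ≤ 0`. Every `Q` in the
weak*-closed convex hull of the Dirac functionals has `Q 1 = 1`, since that equation cuts out a
weak*-closed affine hyperplane containing them.
-/

open BoundedContinuousFunction

theorem WeakDual.apply_eq_of_mem_closure_convexHull {E : Type*} [AddCommGroup E] [Module ℝ E]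
    [TopologicalSpace E] {s : Set (WeakDual ℝ E)} {v : E} {c : ℝ} (hs : ∀ R ∈ s, R v = c)
    {Q : WeakDual ℝ E} (hQ : Q ∈ closure (convexHull ℝ s)) : Q v = c := by
  have hclosed : IsClosed {R : WeakDual ℝ E | R v = c} :=
    isClosed_eq (WeakDual.eval_continuous v) continuous_const
  have hconvex : Convex ℝ {R : WeakDual ℝ E | R v = c} :=
    (convex_singleton c).is_linear_preimage (f := fun R : WeakDual ℝ E => R v)
      ⟨fun _ _ => rfl, fun _ _ => rfl⟩
  exact hclosed.closure_subset_iff.mpr (hconvex.convexHull_subset_iff.mpr hs) hQ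

namespace EReal

theorem sub_le_of_forall_coe_le {a : ℝ} {b c : EReal}
    (h : ∀ r : ℝ, b ≤ r → ((a - r : ℝ) : EReal) ≤ c) : (a : EReal) - b ≤ c := by
  induction b using EReal.rec with
  | bot =>
    rw [coe_sub_bot, top_le_iff, eq_top_iff_forall_lt]
    intro y
    have hy : ((y + 1 : ℝ) : EReal) ≤ c := by
      simpa only [sub_sub_cancel] using h (a - (y + 1)) bot_le
    exact (EReal.coe_lt_coe (lt_add_one y)).trans_le hy
  | coe s => simpa using h s le_rfl
  | top => simp

end EReal

namespace BoundedContinuousFunction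

variable {X : Type*} [TopologicalSpace X]

noncomputable def fenchelConj (f : X → EReal) (φ : X →ᵇ ℝ) : EReal :=
  ⨆ x, (φ x : EReal) - f x

theorem fenchelConj_le_coe_iff {f : X → EReal} {φ : X →ᵇ ℝ} {r : ℝ} :
    fenchelConj f φ ≤ r ↔ ∀ x, ((φ x - r : ℝ) : EReal) ≤ f x := by
  refine iSup_le_iff.trans (forall_congr' fun x => ?_)
  induction f x using EReal.rec with
  | bot => simpa using (EReal.coe_sub _ _).symm.trans_ne (EReal.coe_ne_bot _)
  | coe y => norm_cast; constructor <;> intro <;> linarith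
  | top => simp

theorem fenchelConj_nonpos_of_le {f : X → EReal} {φ : X →ᵇ ℝ} (hφ : ∀ x, (φ x : EReal) ≤ f x) :
    fenchelConj f φ ≤ 0 := by
  simpa using (fenchelConj_le_coe_iff (r := 0)).mpr (by simpa using hφ)

variable {F : Type*} [FunLike F (X →ᵇ ℝ) ℝ] [LinearMapClass F ℝ (X →ᵇ ℝ) ℝ]

theorem map_sub_const {Q : F} (hQ : Q 1 = 1) (φ : X →ᵇ ℝ) (r : ℝ) :
    Q (φ - const X r) = Q φ - r := by
  have : const X r = r • (1 : X →ᵇ ℝ) := by ext; simp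
  rw [map_sub, this, map_smul, hQ, smul_eq_mul, mul_one]

theorem iSup_sub_fenchelConj_eq_iSup_le {Q : F} (hQ : Q 1 = 1) (f : X → EReal) :
    ⨆ φ : X →ᵇ ℝ, (Q φ : EReal) - fenchelConj f φ =
      ⨆ φ : {φ : X →ᵇ ℝ // ∀ x, (φ x : EReal) ≤ f x}, (Q φ : EReal) := by
  refine le_antisymm (iSup_le fun φ => EReal.sub_le_of_forall_coe_le fun r hr => ?_)
    (iSup_le fun ⟨φ, hφ⟩ => le_iSup_of_le φ ?_)
  · rw [← map_sub_const hQ φ r]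
    exact le_iSup_of_le ⟨φ - const X r, by simpa using fenchelConj_le_coe_iff.mp hr⟩ le_rfl
  · simpa using EReal.sub_le_sub (le_refl (Q φ : EReal)) (fenchelConj_nonpos_of_le hφ)

end BoundedContinuousFunction

theorem FTransform_eq_support_function_general
    {X : Type*} [TopologicalSpace X]
    (f : X → EReal) :
    ∃ Δ : X → WeakDual ℝ (X →ᵇ ℝ), (∀ (x : X) (φ : X →ᵇ ℝ), Δ x φ = φ x) ∧
      ∀ Q ∈ closure (convexHull ℝ (Set.range Δ)),
        (⨆ φ : X →ᵇ ℝ, ((Q φ : EReal) - ⨆ x : X, ((φ x : EReal) - f x))) =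
          ⨆ φ : {φ : X →ᵇ ℝ // ∀ x, ((φ : X →ᵇ ℝ) x : EReal) ≤ f x},
            (Q (φ : X →ᵇ ℝ) : EReal) := by
  refine ⟨fun x => (evalCLM ℝ x : (X →ᵇ ℝ) →L[ℝ] ℝ), fun _ _ => rfl, fun Q hQ => ?_⟩
  have hQ1 : Q 1 = 1 := WeakDual.apply_eq_of_mem_closure_convexHull
    (by rintro _ ⟨x, rfl⟩; rfl) hQ
  exact iSup_sub_fenchelConj_eq_iSup_le hQ1 f

theorem FTransform_eq_support_function
    {X : Type*} [TopologicalSpace X] [T2Space X] [NormalSpace X]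
    (f : X → EReal) (hf : LowerSemicontinuous f)
    (hbdd : ∃ m : ℝ, ∀ x, (m : EReal) ≤ f x) (hdom : ∃ x, f x ≠ ⊤) :
    ∃ Δ : X → WeakDual ℝ (X →ᵇ ℝ), (∀ (x : X) (φ : X →ᵇ ℝ), Δ x φ = φ x) ∧
      ∀ Q ∈ closure (convexHull ℝ (Set.range Δ)),
        (⨆ φ : X →ᵇ ℝ, ((Q φ : EReal) - ⨆ x : X, ((φ x : EReal) - f x))) =
          ⨆ φ : {φ : X →ᵇ ℝ // ∀ x, ((φ : X →ᵇ ℝ) x : EReal) ≤ f x},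
            (Q (φ : X →ᵇ ℝ) : EReal) :=
  FTransform_eq_support_function_general f
end
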